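/- arXiv:1904.01951 — 5 statements merged into one kernel-verified Lean document; each statement's English description precedes it below -/
import Mathlib

section
/- Let (S,D) be a complete metric space, φ: S → [0,∞], and M > 0. Let Θ¹_M, Θ²_M : [0,∞) → [0,∞) be continuous increasing functions with Θ¹_M(t)/t → 1 and Θ²_M(t)/t → 0 as t → 0⁺. Assume that for all z₀ ∈ S with φ(z₀) ≤ M and all z₁ ∈ S there exists a curve (γ_s)_{s∈[0,1]} ⊂ S with γ₀ = z₀, γ₁ = z₁, such that D(z₀, γ_s) ≤ s·Θ¹_M(D(z₀,z₁)) and φ(γ_s) ≤ (1−s)φ(z₀) + s·φ(z₁) + s·Θ²_M(D(z₀,z₁)) for all s ∈ [0,1]. Then for every z ∈ S with φ(z) ≤ M the local slope admits the representation |∂φ|_D(z) = sup_{w ∈ S, w ≠ z} (φ(z) − φ(w) − Θ²_M(D(z,w)))⁺ / Θ¹_M(D(z,w)). -/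
/-!
For the upper bound let `L` be the supremum. Every `w ≠ z` satisfies
`φ z - φ w ≤ L Θ¹(d) + Θ²(d)` with `d = D(z, w)`; dividing by `d`, the right-hand side tends to
`L` as `w → z` because `Θ¹(d)/d → 1` and `Θ²(d)/d → 0`.

For the lower bound fix `w ≠ z` and the curve `γ` from `z` to `w`. The convexity estimate gives
`φ z - φ(γ_s) ≥ s (φ z - φ w - Θ²(d))` while `D(z, γ_s) ≤ s Θ¹(d)`, so the difference quotients of
`φ` at the points `γ_s`, which converge to `z` as `s → 0⁺`, are all at least the term of the
supremum belonging to `w`.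
-/

open Filter Topology Set ENNReal

/-- The local slope `|∂φ|_D(u) := limsup_{w→u} (φ(u)−φ(w))⁺ / D(u,w)` (with values in
`[0,∞]`; note that truncated subtraction in `ℝ≥0∞` is exactly the positive part). -/
noncomputable def localSlope {S : Type*} [MetricSpace S] (φ : S → ℝ≥0∞) (u : S) : ℝ≥0∞ :=
  Filter.limsup (fun w => (φ u - φ w) / edist u w) (𝓝[≠] u)

theorem ENNReal.ofReal_mul_tsub_le_tsub_convexComb {a y : ℝ≥0∞} (ha : a ≠ ∞) {s : ℝ}
    (hs0 : 0 ≤ s) (hs1 : s ≤ 1) :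
    ENNReal.ofReal s * (a - y) ≤ a - (ENNReal.ofReal (1 - s) * a + ENNReal.ofReal s * y) := by
  rcases le_total a y with hay | hya
  · simp [tsub_eq_zero_of_le hay]
  refine ENNReal.le_sub_of_add_le_left ?_ (le_of_eq ?_)
  · exact add_ne_top.2
      ⟨mul_ne_top ofReal_ne_top ha, mul_ne_top ofReal_ne_top (ne_top_of_le_ne_top ha hya)⟩
  calc ENNReal.ofReal (1 - s) * a + ENNReal.ofReal s * y + ENNReal.ofReal s * (a - y)
      = ENNReal.ofReal (1 - s) * a + ENNReal.ofReal s * a := by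
        rw [add_assoc, ← mul_add, add_tsub_cancel_of_le hya]
    _ = a := by
        rw [← add_mul, ← ENNReal.ofReal_add (by linarith) hs0, sub_add_cancel, ofReal_one, one_mul]

theorem tendsto_dist_nhdsNE {S : Type*} [MetricSpace S] (z : S) :
    Tendsto (dist z) (𝓝[≠] z) (𝓝[>] 0) := by
  refine tendsto_nhdsWithin_of_tendsto_nhds_of_eventually_within _ ?_ ?_
  · simpa using ((continuous_const (y := z)).dist continuous_id).tendsto z
      |>.mono_left nhdsWithin_le_nhds
  · filter_upwards [self_mem_nhdsWithin] with w hw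
    exact dist_pos.2 (Ne.symm hw)

section LocalSlope

variable {S : Type*} [MetricSpace S] {φ : S → ℝ≥0∞} {z : S}

theorem localSlope_le_of_tendsto {g : S → ℝ≥0∞} {L : ℝ≥0∞}
    (hle : ∀ᶠ w in 𝓝[≠] z, (φ z - φ w) / edist z w ≤ g w) (hg : Tendsto g (𝓝[≠] z) (𝓝 L)) :
    localSlope φ z ≤ L := by
  rcases eq_or_neBot (𝓝[≠] z) with hbot | _
  · simp [localSlope, hbot]
  · exact (limsup_le_limsup hle).trans hg.limsup_eq.le

theorem localSlope_le_of_forall_le {Θ1 Θ2 : ℝ → ℝ}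
    (hΘ1lim : Tendsto (fun t => Θ1 t / t) (𝓝[>] 0) (𝓝 1))
    (hΘ2lim : Tendsto (fun t => Θ2 t / t) (𝓝[>] 0) (𝓝 0)) {L : ℝ≥0∞}
    (hL : ∀ w ≠ z,
      (φ z - φ w - ENNReal.ofReal (Θ2 (dist z w))) / ENNReal.ofReal (Θ1 (dist z w)) ≤ L) :
    localSlope φ z ≤ L := by
  rcases eq_or_ne L ∞ with rfl | hLtop
  · exact le_top
  refine localSlope_le_of_tendsto (g := fun w => L * ENNReal.ofReal (Θ1 (dist z w) / dist z w)
    + ENNReal.ofReal (Θ2 (dist z w) / dist z w)) ?_ ?_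
  · filter_upwards [self_mem_nhdsWithin] with w hw
    have hd : 0 < dist z w := dist_pos.2 (Ne.symm hw)
    have hdrop : φ z - φ w ≤
        L * ENNReal.ofReal (Θ1 (dist z w)) + ENNReal.ofReal (Θ2 (dist z w)) :=
      tsub_le_iff_right.1 <|
        (ENNReal.div_le_iff_le_mul (Or.inr hLtop) (Or.inl ofReal_ne_top)).1 (hL w hw)
    calc (φ z - φ w) / edist z w
        ≤ (L * ENNReal.ofReal (Θ1 (dist z w)) + ENNReal.ofReal (Θ2 (dist z w)))
            / ENNReal.ofReal (dist z w) := by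
          rw [← edist_dist]; exact ENNReal.div_le_div hdrop le_rfl
      _ = L * ENNReal.ofReal (Θ1 (dist z w) / dist z w)
            + ENNReal.ofReal (Θ2 (dist z w) / dist z w) := by
          rw [ENNReal.add_div, mul_div_assoc, ENNReal.ofReal_div_of_pos hd,
            ENNReal.ofReal_div_of_pos hd]
  · have hdist := tendsto_dist_nhdsNE z
    simpa using (ENNReal.Tendsto.const_mul (ENNReal.tendsto_ofReal (hΘ1lim.comp hdist))
      (Or.inr hLtop)).add (ENNReal.tendsto_ofReal (hΘ2lim.comp hdist))

theorem le_localSlope_of_curve (hz : φ z ≠ ∞) {y : ℝ≥0∞} {c : ℝ} {γ : ℝ → S}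
    (hγ : ∀ s ∈ Ioc (0 : ℝ) 1, dist z (γ s) ≤ s * c ∧
      φ (γ s) ≤ ENNReal.ofReal (1 - s) * φ z + ENNReal.ofReal s * y) :
    (φ z - y) / ENNReal.ofReal c ≤ localSlope φ z := by
  rcases le_or_gt (φ z) y with hzy | hyz
  · simp [tsub_eq_zero_of_le hzy]
  have hdrop : ∀ s ∈ Ioc (0 : ℝ) 1, ENNReal.ofReal s * (φ z - y) ≤ φ z - φ (γ s) := fun s hs =>
    (ofReal_mul_tsub_le_tsub_convexComb hz hs.1.le hs.2).trans (tsub_le_tsub_left (hγ s hs).2 _)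
  have hne : ∀ s ∈ Ioc (0 : ℝ) 1, γ s ≠ z := by
    intro s hs hsz
    have hpos : ENNReal.ofReal s * (φ z - y) ≠ 0 :=
      mul_ne_zero (ofReal_pos.2 hs.1).ne' (tsub_pos_of_lt hyz).ne'
    simpa [hsz] using hpos.bot_lt.trans_le (hdrop s hs)
  have hmem : ∀ᶠ s in 𝓝[>] (0 : ℝ), s ∈ Ioc 0 1 := Ioc_mem_nhdsGT one_pos
  have hγz : Tendsto γ (𝓝[>] 0) (𝓝[≠] z) := by
    refine tendsto_nhdsWithin_iff.2 ⟨tendsto_iff_dist_tendsto_zero.2 ?_, hmem.mono hne⟩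
    have hlin : Tendsto (fun s : ℝ => s * c) (𝓝[>] 0) (𝓝 0) := by
      simpa using (tendsto_id.mul_const c).mono_left (nhdsWithin_le_nhds (a := (0 : ℝ)))
    refine squeeze_zero' (Eventually.of_forall fun _ => dist_nonneg) ?_ hlin
    exact hmem.mono fun s hs => dist_comm z (γ s) ▸ (hγ s hs).1
  have hquot : ∀ s ∈ Ioc (0 : ℝ) 1, (φ z - y) / ENNReal.ofReal c ≤
      (φ z - φ (γ s)) / edist z (γ s) := by
    intro s hs
    rw [← ENNReal.mul_div_mul_left _ _ (ofReal_pos.2 hs.1).ne' ofReal_ne_top,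
      ← ENNReal.ofReal_mul hs.1.le, edist_dist]
    exact ENNReal.div_le_div (hdrop s hs) (ENNReal.ofReal_le_ofReal (hγ s hs).1)
  exact le_limsup_of_frequently_le (hγz.frequently (hmem.mono hquot).frequently)

end LocalSlope

theorem localSlope_representation_general
    {S : Type*} [MetricSpace S]
    (φ : S → ℝ≥0∞) (M : ℝ)
    (Θ1 Θ2 : ℝ → ℝ)
    (hΘ1lim : Tendsto (fun t => Θ1 t / t) (𝓝[>] 0) (𝓝 1))
    (hΘ2lim : Tendsto (fun t => Θ2 t / t) (𝓝[>] 0) (𝓝 0))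
    (hcurves : ∀ z0 z1 : S, φ z0 ≤ ENNReal.ofReal M →
      ∃ γ : ℝ → S, γ 0 = z0 ∧ γ 1 = z1 ∧
        ∀ s ∈ Icc (0:ℝ) 1,
          dist z0 (γ s) ≤ s * Θ1 (dist z0 z1) ∧
          φ (γ s) ≤ ENNReal.ofReal (1 - s) * φ z0 + ENNReal.ofReal s * φ z1 +
            ENNReal.ofReal (s * Θ2 (dist z0 z1)))
    (z : S) (hz : φ z ≤ ENNReal.ofReal M) :
    localSlope φ z = ⨆ w ∈ {w : S | w ≠ z},
      (φ z - φ w - ENNReal.ofReal (Θ2 (dist z w))) / ENNReal.ofReal (Θ1 (dist z w)) := by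
  refine le_antisymm (localSlope_le_of_forall_le hΘ1lim hΘ2lim fun w hw => ?_) (iSup₂_le ?_)
  · exact le_iSup₂ (f := fun w (_ : w ∈ {w : S | w ≠ z}) =>
      (φ z - φ w - ENNReal.ofReal (Θ2 (dist z w))) / ENNReal.ofReal (Θ1 (dist z w))) w hw
  intro w _
  obtain ⟨γ, -, -, hγ⟩ := hcurves z w hz
  rw [tsub_tsub]
  refine le_localSlope_of_curve (γ := γ) (ne_top_of_le_ne_top ofReal_ne_top hz) fun s hs => ?_
  obtain ⟨hdist, hφ⟩ := hγ s (Ioc_subset_Icc_self hs)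
  refine ⟨hdist, hφ.trans_eq ?_⟩
  rw [add_assoc, ENNReal.ofReal_mul hs.1.le, mul_add]

/-- Under the generalized convexity assumption along curves with moduli
`Θ¹_M, Θ²_M`, the local slope admits the global representation
`|∂φ|_D(z) = sup_{w ≠ z} (φ(z) − φ(w) − Θ²_M(D(z,w)))⁺ / Θ¹_M(D(z,w))`
on the sublevel set `{φ ≤ M}`. -/
theorem localSlope_representation
    {S : Type*} [MetricSpace S] [CompleteSpace S]
    (φ : S → ℝ≥0∞) (M : ℝ) (hM : 0 < M)
    (Θ1 Θ2 : ℝ → ℝ)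
    (hΘ1cont : ContinuousOn Θ1 (Ici 0)) (hΘ2cont : ContinuousOn Θ2 (Ici 0))
    (hΘ1mono : MonotoneOn Θ1 (Ici 0)) (hΘ2mono : MonotoneOn Θ2 (Ici 0))
    (hΘ1nonneg : ∀ t : ℝ, 0 ≤ t → 0 ≤ Θ1 t) (hΘ2nonneg : ∀ t : ℝ, 0 ≤ t → 0 ≤ Θ2 t)
    (hΘ1lim : Tendsto (fun t => Θ1 t / t) (𝓝[>] 0) (𝓝 1))
    (hΘ2lim : Tendsto (fun t => Θ2 t / t) (𝓝[>] 0) (𝓝 0))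
    (hcurves : ∀ z0 z1 : S, φ z0 ≤ ENNReal.ofReal M →
      ∃ γ : ℝ → S, γ 0 = z0 ∧ γ 1 = z1 ∧
        ∀ s ∈ Icc (0:ℝ) 1,
          dist z0 (γ s) ≤ s * Θ1 (dist z0 z1) ∧
          φ (γ s) ≤ ENNReal.ofReal (1 - s) * φ z0 + ENNReal.ofReal s * φ z1 +
            ENNReal.ofReal (s * Θ2 (dist z0 z1)))
    (z : S) (hz : φ z ≤ ENNReal.ofReal M) :
    localSlope φ z = ⨆ w ∈ {w : S | w ≠ z},
      (φ z - φ w - ENNReal.ofReal (Θ2 (dist z w))) / ENNReal.ofReal (Θ1 (dist z w)) :=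
  localSlope_representation_general φ M Θ1 Θ2 hΘ1lim hΘ2lim hcurves z hz
end

section
/- Let (S,D) be a complete metric space, φ: S → [0,∞], and λ ∈ ℝ; set λ⁻ := −λ if λ ≤ 0 and interpret 1/λ⁻ := +∞ if λ ≥ 0. Let z₀, z₁ ∈ S with φ(z₀) < ∞ and φ(z₁) < ∞, and suppose there exists a curve (γ_s)_{s∈[0,1]} ⊂ S with γ₀ = z₀ and γ₁ = z₁ such that for all τ ∈ (0, 1/λ⁻) and all s ∈ [0,1] one has Φ(τ,z₀;γ_s) ≤ (1−s)·Φ(τ,z₀;γ₀) + s·Φ(τ,z₀;γ₁) − ½(1/τ + λ)·s(1−s)·D(z₀,z₁)², where Φ(τ,u;v) := D(v,u)²/(2τ) + φ(v). Then for all s ∈ [0,1]: (i) D(z₀, γ_s) ≤ s·D(z₀,z₁), and (ii) φ(γ_s) ≤ (1−s)·φ(z₀) + s·φ(z₁) + s·(λ⁻/2)·D(z₀,z₁)² (where λ⁻/2 is taken to be 0 when λ ≥ 0). -/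
open Filter Topology Set ENNReal

/-!
Write `μ = 1/τ`, `a = D(z₀,γ_s)`, `d = D(z₀,z₁)`. Since `s·d²/(2τ) - s(1-s)d²/(2τ) = s²d²/(2τ)`,
the hypothesis at a fixed `s` says that `μ ↦ μ·(a² - s²d²)/2` is bounded above on the ray
`μ > λ⁻` by `(1-s)φ(z₀) + sφ(z₁) - (λ/2)s(1-s)d² - φ(γ_s)`. Boundedness as `μ → ∞` forces
`a ≤ s·d`, and letting `μ ↓ λ⁻` gives the estimate for `φ(γ_s)`, because `s²λ⁻ - s(1-s)λ ≤ sλ⁻`.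
-/

theorem nonpos_of_forall_gt_mul_le {m p c : ℝ} (h : ∀ μ > m, μ * p ≤ c) : p ≤ 0 := by
  by_contra! hp
  have hμ := h (max (m + 1) (c / p + 1)) (by simp)
  have : (c / p + 1) * p ≤ max (m + 1) (c / p + 1) * p :=
    mul_le_mul_of_nonneg_right (le_max_right _ _) hp.le
  rw [add_mul, div_mul_cancel₀ c hp.ne'] at this
  linarith

theorem mul_le_of_forall_gt_mul_le {m p c : ℝ} (h : ∀ μ > m, μ * p ≤ c) : m * p ≤ c := by
  have hlim : Tendsto (fun μ => μ * p) (𝓝[>] m) (𝓝 (m * p)) :=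
    ((continuous_mul_const p).tendsto m).mono_left nhdsWithin_le_nhds
  exact le_of_tendsto hlim (eventually_nhdsWithin_of_forall h)

theorem admissible_inv_of_max_neg_zero_lt {lam μ : ℝ} (hμ : max (-lam) 0 < μ) :
    0 < μ⁻¹ ∧ (lam < 0 → μ⁻¹ < 1 / (-lam)) := by
  have hμ0 : 0 < μ := (le_max_right _ _).trans_lt hμ
  refine ⟨inv_pos.2 hμ0, fun hlam => ?_⟩
  rw [one_div]
  exact inv_strictAnti₀ (neg_pos.2 hlam) ((le_max_left _ _).trans_lt hμ)

theorem geodesic_estimates_of_forall_admissible {lam s a d f f0 f1 : ℝ}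
    (hs : s ∈ Icc (0 : ℝ) 1) (ha : 0 ≤ a) (hd : 0 ≤ d)
    (h : ∀ τ : ℝ, 0 < τ → (lam < 0 → τ < 1 / (-lam)) →
      a ^ 2 / (2 * τ) + f ≤
        (1 - s) * f0 + s * (d ^ 2 / (2 * τ) + f1) - 2⁻¹ * (1 / τ + lam) * (s * (1 - s)) * d ^ 2) :
    a ≤ s * d ∧ f ≤ (1 - s) * f0 + s * f1 + s * (max (-lam) 0 / 2) * d ^ 2 := by
  obtain ⟨hs0, hs1⟩ := hs
  set m := max (-lam) 0
  have hμ : ∀ μ > m, μ * ((a ^ 2 - (s * d) ^ 2) / 2) ≤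
      (1 - s) * f0 + s * f1 - lam / 2 * (s * (1 - s)) * d ^ 2 - f := by
    intro μ hμ
    have hτ := admissible_inv_of_max_neg_zero_lt hμ
    have := h μ⁻¹ hτ.1 hτ.2
    simp only [div_mul_eq_div_div, div_inv_eq_mul] at this
    linear_combination this
  have hsq : a ^ 2 ≤ (s * d) ^ 2 := by
    have := nonpos_of_forall_gt_mul_le hμ
    linarith
  refine ⟨(pow_le_pow_iff_left₀ ha (mul_nonneg hs0 hd) two_ne_zero).1 hsq, ?_⟩
  have hm := mul_le_of_forall_gt_mul_le hμ
  have hlam : -lam ≤ m := le_max_left _ _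
  have hm0 : 0 ≤ m := le_max_right _ _
  nlinarith [mul_nonneg hm0 (sq_nonneg a), mul_nonneg (mul_nonneg (sub_nonneg.2 hlam)
    (mul_nonneg hs0 (sub_nonneg.2 hs1))) (sq_nonneg d)]

theorem EReal.ne_top_and_add_le_of_add_le {a b : ℝ} {x : ℝ≥0∞}
    (h : (a : EReal) + (x : EReal) ≤ (b : EReal)) : x ≠ ⊤ ∧ a + x.toReal ≤ b := by
  have hx : x ≠ ⊤ := by
    rintro rfl
    simp at h
  refine ⟨hx, ?_⟩
  rw [← EReal.coe_ennreal_toReal hx] at h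
  exact_mod_cast h

theorem ENNReal.le_ofReal_mul_add_ofReal_mul_add_ofReal {x y z : ℝ≥0∞} {a b c : ℝ}
    (hx : x ≠ ⊤) (hy : y ≠ ⊤) (hz : z ≠ ⊤) (ha : 0 ≤ a) (hb : 0 ≤ b) (hc : 0 ≤ c)
    (h : z.toReal ≤ a * x.toReal + b * y.toReal + c) :
    z ≤ ENNReal.ofReal a * x + ENNReal.ofReal b * y + ENNReal.ofReal c := by
  rw [← ENNReal.ofReal_toReal hx, ← ENNReal.ofReal_toReal hy, ← ENNReal.ofReal_toReal hz,
    ← ENNReal.ofReal_mul ha, ← ENNReal.ofReal_mul hb,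
    ← ENNReal.ofReal_add (by positivity) (by positivity), ← ENNReal.ofReal_add (by positivity) hc]
  exact ENNReal.ofReal_le_ofReal h

theorem lambda_convexity_implies_generalized_geodesic_property_general
    {S : Type*} [MetricSpace S]
    (φ : S → ℝ≥0∞) (lam : ℝ) (z0 z1 : S)
    (h0 : φ z0 ≠ ⊤) (h1 : φ z1 ≠ ⊤)
    (γ : ℝ → S) (hγ0 : γ 0 = z0) (hγ1 : γ 1 = z1)
    (hconv : ∀ τ : ℝ, 0 < τ → (lam < 0 → τ < 1 / (-lam)) →
      ∀ s ∈ Icc (0:ℝ) 1,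
        ((dist (γ s) z0 ^ 2 / (2 * τ) : ℝ) : EReal) + (φ (γ s) : EReal) ≤
          ((1 - s : ℝ) : EReal) *
              (((dist (γ 0) z0 ^ 2 / (2 * τ) : ℝ) : EReal) + (φ (γ 0) : EReal))
            + ((s : ℝ) : EReal) *
              (((dist (γ 1) z0 ^ 2 / (2 * τ) : ℝ) : EReal) + (φ (γ 1) : EReal))
            - ((2⁻¹ * (1 / τ + lam) * (s * (1 - s)) * dist z0 z1 ^ 2 : ℝ) : EReal)) :
    ∀ s ∈ Icc (0:ℝ) 1,
      dist z0 (γ s) ≤ s * dist z0 z1 ∧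
      φ (γ s) ≤ ENNReal.ofReal (1 - s) * φ z0 + ENNReal.ofReal s * φ z1 +
        ENNReal.ofReal (s * (max (-lam) 0 / 2) * dist z0 z1 ^ 2) := by
  intro s hs
  have hreal : ∀ τ : ℝ, 0 < τ → (lam < 0 → τ < 1 / (-lam)) →
      ((dist (γ s) z0 ^ 2 / (2 * τ) : ℝ) : EReal) + (φ (γ s) : EReal) ≤
        (((1 - s) * (φ z0).toReal + s * (dist z0 z1 ^ 2 / (2 * τ) + (φ z1).toReal)
          - 2⁻¹ * (1 / τ + lam) * (s * (1 - s)) * dist z0 z1 ^ 2 : ℝ) : EReal) := by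
    intro τ hτ hadm
    have h := hconv τ hτ hadm s hs
    rw [hγ0, hγ1, dist_self, dist_comm z1 z0, ← EReal.coe_ennreal_toReal h0,
      ← EReal.coe_ennreal_toReal h1] at h
    refine h.trans_eq ?_
    norm_cast
    ring
  have hadm := admissible_inv_of_max_neg_zero_lt (lt_add_one (max (-lam) 0))
  have hfin := (EReal.ne_top_and_add_le_of_add_le (hreal _ hadm.1 hadm.2)).1
  obtain ⟨hdist, hφ⟩ := geodesic_estimates_of_forall_admissible hs dist_nonneg dist_nonneg
    fun τ hτ hadm => (EReal.ne_top_and_add_le_of_add_le (hreal τ hτ hadm)).2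
  refine ⟨dist_comm z0 (γ s) ▸ hdist, ?_⟩
  exact ENNReal.le_ofReal_mul_add_ofReal_mul_add_ofReal h0 h1 hfin (sub_nonneg.2 hs.2) hs.1
    (mul_nonneg (mul_nonneg hs.1 (div_nonneg (le_max_right _ _) zero_le_two)) (sq_nonneg _)) hφ

/-- If the Moreau–Yosida functionals `Φ(τ,z₀;·)` are `λ`-convex along the
curve `γ` for all `τ ∈ (0, 1/λ⁻)`, then `γ` satisfies the distance estimate
`D(z₀,γ_s) ≤ s·D(z₀,z₁)` and the convexity estimate
`φ(γ_s) ≤ (1−s)φ(z₀) + sφ(z₁) + s·(λ⁻/2)·D(z₀,z₁)²`. -/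
theorem lambda_convexity_implies_generalized_geodesic_property
    {S : Type*} [MetricSpace S] [CompleteSpace S]
    (φ : S → ℝ≥0∞) (lam : ℝ) (z0 z1 : S)
    (h0 : φ z0 ≠ ⊤) (h1 : φ z1 ≠ ⊤)
    (γ : ℝ → S) (hγ0 : γ 0 = z0) (hγ1 : γ 1 = z1)
    (hconv : ∀ τ : ℝ, 0 < τ → (lam < 0 → τ < 1 / (-lam)) →
      ∀ s ∈ Icc (0:ℝ) 1,
        ((dist (γ s) z0 ^ 2 / (2 * τ) : ℝ) : EReal) + (φ (γ s) : EReal) ≤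
          ((1 - s : ℝ) : EReal) *
              (((dist (γ 0) z0 ^ 2 / (2 * τ) : ℝ) : EReal) + (φ (γ 0) : EReal))
            + ((s : ℝ) : EReal) *
              (((dist (γ 1) z0 ^ 2 / (2 * τ) : ℝ) : EReal) + (φ (γ 1) : EReal))
            - ((2⁻¹ * (1 / τ + lam) * (s * (1 - s)) * dist z0 z1 ^ 2 : ℝ) : EReal)) :
    ∀ s ∈ Icc (0:ℝ) 1,
      dist z0 (γ s) ≤ s * dist z0 z1 ∧
      φ (γ s) ≤ ENNReal.ofReal (1 - s) * φ z0 + ENNReal.ofReal s * φ z1 +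
        ENNReal.ofReal (s * (max (-lam) 0 / 2) * dist z0 z1 ^ 2) :=
  lambda_convexity_implies_generalized_geodesic_property_general φ lam z0 z1 h0 h1 γ hγ0 hγ1 hconv
end

section
/- Let (S,D) be a complete metric space, φ: S → [0,∞], and let σ be a Hausdorff topology on S such that: (A) for each N ∈ ℕ there exists a σ-sequentially compact set K_N ⊂ S with {z ∈ S : φ(z) ≤ N} ⊂ K_N; (B) if z_k → z and w_k → w in σ then liminf_k D(z_k,w_k) ≥ D(z,w), and if z_k → z in σ then liminf_k φ(z_k) ≥ φ(z). Let S' ⊂ S be sequentially closed with respect to σ, let τ > 0, and let u ∈ S' with φ(u) < ∞. Then the functional v ↦ Φ(τ,u;v) := D(v,u)²/(2τ) + φ(v) attains its minimum over S', i.e. there exists v* ∈ S' with Φ(τ,u;v*) ≤ Φ(τ,u;v) for all v ∈ S'. -/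
open Filter Topology Set ENNReal

lemma ennreal_liminf_add_liminf_le (a b : ℕ → ℝ≥0∞) :
    Filter.liminf a Filter.atTop + Filter.liminf b Filter.atTop
      ≤ Filter.liminf (fun k => a k + b k) Filter.atTop := by
  simp_rw [Filter.liminf_eq_iSup_iInf_of_nat]
  rw [ENNReal.iSup_add_iSup_of_monotone
      (f := fun n => ⨅ i ≥ n, a i) (g := fun n => ⨅ i ≥ n, b i)
      (fun n m h => le_iInf₂ fun i hi => iInf₂_le i (h.trans hi))
      (fun n m h => le_iInf₂ fun i hi => iInf₂_le i (h.trans hi))]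
  gcongr with n
  exact le_iInf₂ fun i hi => add_le_add (iInf₂_le i hi) (iInf₂_le i hi)

/-- Under σ-sequential compactness of sublevel sets of `φ` and σ-sequential
lower semicontinuity of `D` and `φ`, the Moreau–Yosida functional
`v ↦ D(v,u)²/(2τ) + φ(v)` attains its minimum over any σ-sequentially closed set `S'`. -/
theorem moreau_yosida_minimizer_exists
    {S : Type*} [MetricSpace S] [CompleteSpace S]
    (φ : S → ℝ≥0∞)
    (σ : TopologicalSpace S) (hT2 : @T2Space S σ)
    (hcompact : ∀ N : ℕ, ∃ K : Set S, @IsSeqCompact S σ K ∧ {z : S | φ z ≤ (N : ℝ≥0∞)} ⊆ K)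
    (hDlsc : ∀ (z w : ℕ → S) (z' w' : S),
      Tendsto z atTop (@nhds S σ z') → Tendsto w atTop (@nhds S σ w') →
      edist z' w' ≤ liminf (fun k => edist (z k) (w k)) atTop)
    (hφlsc : ∀ (z : ℕ → S) (z' : S), Tendsto z atTop (@nhds S σ z') →
      φ z' ≤ liminf (fun k => φ (z k)) atTop)
    (S' : Set S)
    (hS'closed : ∀ (z : ℕ → S) (z' : S), (∀ k, z k ∈ S') →
      Tendsto z atTop (@nhds S σ z') → z' ∈ S')
    (τ : ℝ) (hτ : 0 < τ) (u : S) (hu : u ∈ S') (hφu : φ u ≠ ⊤) :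
    ∃ v ∈ S', ∀ w ∈ S',
      ENNReal.ofReal (dist v u ^ 2 / (2 * τ)) + φ v ≤
        ENNReal.ofReal (dist w u ^ 2 / (2 * τ)) + φ w := by
  have h2τ : (0:ℝ) < 2 * τ := by linarith
  set c : ℝ≥0∞ := ENNReal.ofReal (2 * τ) with hc
  have hc0 : c ≠ 0 := ne_of_gt (ENNReal.ofReal_pos.mpr h2τ)
  set Φ : S → ℝ≥0∞ := fun w => edist w u ^ 2 / c + φ w with hΦ
  have hrw : ∀ w : S, ENNReal.ofReal (dist w u ^ 2 / (2 * τ)) + φ w = Φ w := by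
    intro w
    rw [hΦ]
    congr 1
    rw [ENNReal.ofReal_div_of_pos h2τ, ENNReal.ofReal_pow dist_nonneg, ← edist_dist]
  simp only [hrw]
  -- infimum
  set m : ℝ≥0∞ := ⨅ w ∈ S', Φ w with hm
  have hmu : m ≤ Φ u := biInf_le Φ hu
  have hΦu_lt : Φ u < ⊤ := by
    rw [hΦ]
    simp only [edist_self]
    simp [hφu.lt_top, hc0]
  have hm_lt : m < ⊤ := hmu.trans_lt hΦu_lt
  -- minimizing sequence
  have hseq : ∀ k : ℕ, ∃ z ∈ S', Φ z < m + ((k:ℝ≥0∞)+1)⁻¹ := by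
    intro k
    have : m < m + ((k:ℝ≥0∞)+1)⁻¹ :=
      ENNReal.lt_add_right hm_lt.ne (by simp)
    rw [hm, iInf_lt_iff] at this
    obtain ⟨w, hw⟩ := this
    rw [iInf_lt_iff] at hw
    obtain ⟨hwS, hw⟩ := hw
    exact ⟨w, hwS, hw⟩
  choose z hzS hzΦ using hseq
  -- bound on φ z k
  obtain ⟨N, hN⟩ := ENNReal.exists_nat_gt (r := m + 1) (by finiteness)
  have hzK : ∀ k, φ (z k) ≤ (N : ℝ≥0∞) := by
    intro k
    refine le_trans ?_ hN.le
    calc φ (z k) ≤ Φ (z k) := le_add_self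
      _ ≤ m + ((k:ℝ≥0∞)+1)⁻¹ := (hzΦ k).le
      _ ≤ m + 1 := by
          gcongr
          exact ENNReal.inv_le_one.mpr le_add_self
  obtain ⟨K, hKcomp, hKsub⟩ := hcompact N
  obtain ⟨v, hvK, g, hg, hconv⟩ := hKcomp (fun k => hKsub (hzK k))
  have hvS' : v ∈ S' := hS'closed (z ∘ g) v (fun k => hzS (g k)) hconv
  refine ⟨v, hvS', fun w hw => ?_⟩
  -- it suffices to show Φ v ≤ m
  have key : Φ v ≤ m := by
    -- distance part
    have hD : edist v u ≤ liminf (fun k => edist (z (g k)) u) atTop :=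
      hDlsc (z ∘ g) (fun _ => u) v u hconv tendsto_const_nhds
    have hf_mono : Monotone (fun x : ℝ≥0∞ => x ^ 2 / c) := fun a b hab => by dsimp only; gcongr
    have hf_cont : Continuous (fun x : ℝ≥0∞ => x ^ 2 / c) :=
      (ENNReal.continuous_div_const c hc0).comp (ENNReal.continuous_pow 2)
    have hA : edist v u ^ 2 / c ≤ liminf (fun k => edist (z (g k)) u ^ 2 / c) atTop := by
      calc edist v u ^ 2 / c ≤ (liminf (fun k => edist (z (g k)) u) atTop) ^ 2 / c :=
            hf_mono hD
        _ = liminf (fun k => edist (z (g k)) u ^ 2 / c) atTop := by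
            exact hf_mono.map_liminf_of_continuousAt _ hf_cont.continuousAt
    have hB : φ v ≤ liminf (fun k => φ (z (g k))) atTop := hφlsc (z ∘ g) v hconv
    have hsum : Φ v ≤ liminf (fun k => Φ (z (g k))) atTop := by
      calc Φ v = edist v u ^ 2 / c + φ v := rfl
        _ ≤ liminf (fun k => edist (z (g k)) u ^ 2 / c) atTop
              + liminf (fun k => φ (z (g k))) atTop := add_le_add hA hB
        _ ≤ liminf (fun k => edist (z (g k)) u ^ 2 / c + φ (z (g k))) atTop :=
            ennreal_liminf_add_liminf_le _ _
        _ = liminf (fun k => Φ (z (g k))) atTop := rfl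
    -- liminf of minimizing sequence is ≤ m
    have hlim : liminf (fun k => Φ (z (g k))) atTop ≤ m := by
      have hub : ∀ k, Φ (z (g k)) ≤ m + ((k:ℝ≥0∞)+1)⁻¹ := by
        intro k
        refine (hzΦ (g k)).le.trans ?_
        gcongr
        exact_mod_cast hg.le_apply
      have htend : Tendsto (fun k : ℕ => m + ((k:ℝ≥0∞)+1)⁻¹) atTop (𝓝 m) := by
        have h0 : Tendsto (fun k : ℕ => ((k:ℝ≥0∞)+1)⁻¹) atTop (𝓝 0) := by
          have := ENNReal.tendsto_inv_nat_nhds_zero.comp (tendsto_add_atTop_nat 1)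
          convert this using 2 with k
          simp [Function.comp]
        simpa using Filter.Tendsto.add (tendsto_const_nhds (x := m)) h0
      calc liminf (fun k => Φ (z (g k))) atTop
          ≤ liminf (fun k : ℕ => m + ((k:ℝ≥0∞)+1)⁻¹) atTop :=
            liminf_le_liminf (Eventually.of_forall hub)
        _ = m := htend.liminf_eq
    exact hsum.trans hlim
  exact key.trans (biInf_le Φ hw)
end

section
/- Let Q³: ℝ^{3×3} → ℝ be a quadratic form, i.e. Q³(F) = C[F,F] for a symmetric bilinear form C on ℝ^{3×3}, satisfying: Q³(F) = Q³(½(F + Fᵀ)) for all F ∈ ℝ^{3×3}, Q³(F) ≥ 0 for all F ∈ ℝ^{3×3}, and Q³(F) > 0 for every symmetric F ∈ ℝ^{3×3} with F ≠ 0. For G ∈ ℝ^{2×2} let G* ∈ ℝ^{3×3} be defined by (G*)_{ij} = G_{ij} for i,j ∈ {1,2} and (G*)_{ij} = 0 otherwise, and define Q²(G) := inf_{a ∈ ℝ³} Q³(G* + a⊗e₃ + e₃⊗a), where (a⊗e₃)_{ij} = a_i (e₃)_j and e₃ = (0,0,1). Then: (i) for every G ∈ ℝ^{2×2} the infimum is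 attained, i.e. there exists a ∈ ℝ³ with Q²(G) = Q³(G* + a⊗e₃ + e₃⊗a); (ii) Q²(G) ≥ 0 for all G ∈ ℝ^{2×2}; and (iii) Q²(G) > 0 for every symmetric G ∈ ℝ^{2×2} with G ≠ 0. -/
open Matrix

/-- The third standard basis vector `e₃ = (0,0,1)` of `ℝ³`. -/
def e3 : Fin 3 → ℝ := fun j => if j = 2 then 1 else 0

/-- The embedding `G ↦ G*` of `2×2` matrices into `3×3` matrices:
`(G*)_{ij} = G_{ij}` for `i,j ∈ {1,2}` and `0` otherwise. -/
def matStar (G : Matrix (Fin 2) (Fin 2) ℝ) : Matrix (Fin 3) (Fin 3) ℝ :=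
  Matrix.of fun i j => if h : i.1 < 2 ∧ j.1 < 2 then G ⟨i.1, h.1⟩ ⟨j.1, h.2⟩ else 0

/-- The reduced quadratic form `Q²(G) := inf_{a ∈ ℝ³} Q³(G* + a⊗e₃ + e₃⊗a)`. -/
noncomputable def Q2 (Q3 : Matrix (Fin 3) (Fin 3) ℝ → ℝ) (G : Matrix (Fin 2) (Fin 2) ℝ) : ℝ :=
  sInf (Set.range fun a : Fin 3 → ℝ =>
    Q3 (matStar G + Matrix.vecMulVec a e3 + Matrix.vecMulVec e3 a))

/-- The linear map `a ↦ a⊗e₃ + e₃⊗a`. -/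
def Lmap : (Fin 3 → ℝ) →ₗ[ℝ] Matrix (Fin 3) (Fin 3) ℝ where
  toFun a := Matrix.vecMulVec a e3 + Matrix.vecMulVec e3 a
  map_add' a b := by
    ext i j
    simp [Matrix.vecMulVec_apply]
    ring
  map_smul' c a := by
    ext i j
    simp [Matrix.vecMulVec_apply]
    ring

lemma Lmap_isSymm (a : Fin 3 → ℝ) : (Lmap a).IsSymm := by
  ext i j
  simp [Lmap, Matrix.vecMulVec_apply, Matrix.transpose_apply]
  ring

lemma Lmap_eq_zero {a : Fin 3 → ℝ} (h : Lmap a = 0) : a = 0 := by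
  funext i
  have h2 := congrFun (congrFun h i) 2
  fin_cases i <;> simp [Lmap, Matrix.vecMulVec_apply, e3] at h2 <;>
    simpa using h2

/-- If `Q³` is a quadratic form on `ℝ^{3×3}` (given by a symmetric bilinear
form `C`), depending only on the symmetric part, nonnegative, and positive definite on
symmetric matrices, then the infimum defining `Q²` is attained, `Q²` is nonnegative, and
`Q²` is positive on nonzero symmetric `2×2` matrices. -/
theorem reduced_quadratic_form_properties
    (C : Matrix (Fin 3) (Fin 3) ℝ →ₗ[ℝ] Matrix (Fin 3) (Fin 3) ℝ →ₗ[ℝ] ℝ)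
    (hCsymm : ∀ F G : Matrix (Fin 3) (Fin 3) ℝ, C F G = C G F)
    (Q3 : Matrix (Fin 3) (Fin 3) ℝ → ℝ)
    (hQ3 : ∀ F, Q3 F = C F F)
    (hsympart : ∀ F : Matrix (Fin 3) (Fin 3) ℝ, Q3 F = Q3 ((1 / 2 : ℝ) • (F + Fᵀ)))
    (hnonneg : ∀ F : Matrix (Fin 3) (Fin 3) ℝ, 0 ≤ Q3 F)
    (hposdef : ∀ F : Matrix (Fin 3) (Fin 3) ℝ, F.IsSymm → F ≠ 0 → 0 < Q3 F) :
    (∀ G : Matrix (Fin 2) (Fin 2) ℝ, ∃ a : Fin 3 → ℝ,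
        Q2 Q3 G = Q3 (matStar G + Matrix.vecMulVec a e3 + Matrix.vecMulVec e3 a)) ∧
    (∀ G : Matrix (Fin 2) (Fin 2) ℝ, 0 ≤ Q2 Q3 G) ∧
    (∀ G : Matrix (Fin 2) (Fin 2) ℝ, G.IsSymm → G ≠ 0 → 0 < Q2 Q3 G) := by
  -- rewrite the function inside Q2 using Lmap
  have hQ2 : ∀ G, Q2 Q3 G = sInf (Set.range fun a => Q3 (matStar G + Lmap a)) := by
    intro G
    unfold Q2
    congr 1
    ext x
    constructor
    · rintro ⟨a, rfl⟩; exact ⟨a, by simp [Lmap, add_assoc]⟩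
    · rintro ⟨a, rfl⟩; exact ⟨a, by simp [Lmap, add_assoc]⟩
  -- positivity of Q3 on Lmap a for a ≠ 0
  have hLpos : ∀ a : Fin 3 → ℝ, a ≠ 0 → 0 < Q3 (Lmap a) := by
    intro a ha
    exact hposdef _ (Lmap_isSymm a) (fun h => ha (Lmap_eq_zero h))
  -- the bilinear form T a y = C (Lmap a) (Lmap y)
  set T : (Fin 3 → ℝ) →ₗ[ℝ] Module.Dual ℝ (Fin 3 → ℝ) :=
    ((C.compl₂ Lmap).comp Lmap) with hT
  have hTinj : Function.Injective T := by
    rw [← LinearMap.ker_eq_bot, LinearMap.ker_eq_bot']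
    intro a ha
    by_contra hne
    have h0 : T a a = 0 := by rw [ha]; rfl
    have : Q3 (Lmap a) = 0 := by
      rw [hQ3]
      simpa [hT, LinearMap.compl₂_apply] using h0
    exact absurd this (ne_of_gt (hLpos a hne))
  have hTsurj : Function.Surjective T := by
    have := (LinearMap.injective_iff_surjective_of_finrank_eq_finrank
      (f := T) (by simp)).mp hTinj
    exact this
  -- key: for each G, find the minimizer a₀
  have key : ∀ G : Matrix (Fin 2) (Fin 2) ℝ, ∃ a₀ : Fin 3 → ℝ,
      (∀ a, Q3 (matStar G + Lmap a) = Q3 (matStar G + Lmap a₀) + Q3 (Lmap (a - a₀))) := by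
    intro G
    obtain ⟨a₀, ha₀⟩ := hTsurj (-(C (matStar G)).comp Lmap)
    refine ⟨a₀, fun a => ?_⟩
    have hcross : ∀ y : Fin 3 → ℝ, C (matStar G + Lmap a₀) (Lmap y) = 0 := by
      intro y
      have := congrFun (congrArg DFunLike.coe ha₀) y
      simp only [hT, LinearMap.comp_apply, LinearMap.compl₂_apply, LinearMap.neg_apply] at this
      simp [map_add, LinearMap.add_apply, this]
    have hdecomp : matStar G + Lmap a = (matStar G + Lmap a₀) + Lmap (a - a₀) := by
      rw [map_sub]; abel
    rw [hdecomp, hQ3, hQ3 (matStar G + Lmap a₀), hQ3 (Lmap (a - a₀))]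
    have h1 := hcross (a - a₀)
    have h2 : C (Lmap (a - a₀)) (matStar G + Lmap a₀) = 0 := by
      rw [hCsymm]; exact h1
    simp only [map_add, map_sub, LinearMap.add_apply, LinearMap.sub_apply] at h1 h2 ⊢
    linarith
  -- attainment
  have attain : ∀ G : Matrix (Fin 2) (Fin 2) ℝ, ∃ a₀ : Fin 3 → ℝ,
      Q2 Q3 G = Q3 (matStar G + Lmap a₀) := by
    intro G
    obtain ⟨a₀, ha₀⟩ := key G
    refine ⟨a₀, ?_⟩
    rw [hQ2]
    refine IsLeast.csInf_eq ⟨⟨a₀, rfl⟩, ?_⟩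
    rintro x ⟨a, rfl⟩
    dsimp only
    rw [ha₀ a]
    linarith [hnonneg (Lmap (a - a₀))]
  refine ⟨?_, ?_, ?_⟩
  · intro G
    obtain ⟨a₀, ha₀⟩ := attain G
    exact ⟨a₀, by rw [ha₀]; congr 1; simp [Lmap, add_assoc]⟩
  · intro G
    obtain ⟨a₀, ha₀⟩ := attain G
    rw [ha₀]; exact hnonneg _
  · intro G hGsymm hGne
    obtain ⟨a₀, ha₀⟩ := attain G
    rw [ha₀]
    refine hposdef _ ?_ ?_
    · -- symmetric
      have h1 : (matStar G).IsSymm := by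
        ext i j
        simp only [matStar, Matrix.transpose_apply, Matrix.of_apply]
        by_cases h : i.1 < 2 ∧ j.1 < 2
        · rw [dif_pos ⟨h.2, h.1⟩, dif_pos h]
          have := congrFun (congrFun hGsymm ⟨i.1, h.1⟩) ⟨j.1, h.2⟩
          simpa [Matrix.transpose_apply] using this
        · rw [dif_neg (fun hc => h ⟨hc.2, hc.1⟩), dif_neg h]
      exact Matrix.IsSymm.add h1 (Lmap_isSymm a₀)
    · -- nonzero
      intro hM
      apply hGne
      ext i j
      have := congrFun (congrFun hM ⟨i.1, by omega⟩) ⟨j.1, by omega⟩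
      have hi : (⟨i.1, by omega⟩ : Fin 3) ≠ 2 := by
        intro h; have := congrArg Fin.val h; simp at this; omega
      have hj : (⟨j.1, by omega⟩ : Fin 3) ≠ 2 := by
        intro h; have := congrArg Fin.val h; simp at this; omega
      simp only [Matrix.add_apply, Lmap, LinearMap.coe_mk, AddHom.coe_mk,
        Matrix.vecMulVec_apply, matStar, Matrix.of_apply, Matrix.zero_apply] at this ⊢
      rw [dif_pos ⟨i.2, j.2⟩] at this
      simp [e3, hi, hj] at this
      simpa using this
end

section
/- Let H be a real Hilbert space and let b : H × H → ℝ be a continuous symmetric bilinear form. Let (x_k), (y_k) ⊂ H with x_k ⇀ x weakly in H and x_k − y_k → x − y strongly in H for some x, y ∈ H. Then b(x_k,x_k) − b(y_k,y_k) → b(x,x) − b(y,y). -/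
/-!
Put `d_k = x_k - y_k`. By bilinearity,
`b(x,x) - b(y,y) = b(d,x) + b(x,d) - b(d,d)`, and each term on the right passes to the limit:
`b(d_k,d_k)` because `d_k → d` strongly, and `b(d_k,x_k)`, `b(x_k,d_k)` because a strongly
convergent sequence paired with a weakly convergent one converges. For the latter, split
`b(d_k,x_k) = b(d_k - d,x_k) + b(d,x_k)`: the first term is small since weakly convergent
sequences are bounded (Banach–Steinhaus), the second converges since `b(d,·)` is represented by a
vector of `H` (Riesz).
-/

open Filter Topology

theorem ContinuousLinearMap.apply_self_sub_apply_self {𝕜 E F : Type*}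
    [NontriviallyNormedField 𝕜] [NormedAddCommGroup E] [NormedSpace 𝕜 E]
    [NormedAddCommGroup F] [NormedSpace 𝕜 F] (b : E →L[𝕜] E →L[𝕜] F) (x y : E) :
    b x x - b y y = b (x - y) x + b x (x - y) - b (x - y) (x - y) := by
  simp only [map_sub, sub_apply]
  abel

section WeakConvergence

variable {H : Type*} [NormedAddCommGroup H] [InnerProductSpace ℝ H] [CompleteSpace H]
  {x : ℕ → H} {x₀ : H}

theorem exists_norm_le_of_tendsto_inner
    (hweak : ∀ z : H, Tendsto (fun k => inner ℝ (x k) z) atTop (𝓝 (inner ℝ x₀ z))) :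
    ∃ C, ∀ k, ‖x k‖ ≤ C := by
  have hpointwise : ∀ z, ∃ M, ∀ k, ‖innerSL ℝ (x k) z‖ ≤ M := fun z =>
    ((hweak z).norm.bddAbove_range).imp fun _ hM k => hM ⟨k, rfl⟩
  obtain ⟨C, hC⟩ := banach_steinhaus hpointwise
  exact ⟨C, fun k => by simpa using hC k⟩

theorem tendsto_apply_of_tendsto_inner (f : H →L[ℝ] ℝ)
    (hweak : ∀ z : H, Tendsto (fun k => inner ℝ (x k) z) atTop (𝓝 (inner ℝ x₀ z))) :
    Tendsto (fun k => f (x k)) atTop (𝓝 (f x₀)) := by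
  obtain ⟨v, rfl⟩ := (InnerProductSpace.toDual ℝ H).surjective f
  simpa [real_inner_comm] using hweak v

theorem tendsto_apply_apply_of_tendsto_of_tendsto_inner {E : Type*} [NormedAddCommGroup E]
    [NormedSpace ℝ E] (b : E →L[ℝ] H →L[ℝ] ℝ) {d : ℕ → E} {d₀ : E}
    (hd : Tendsto d atTop (𝓝 d₀))
    (hweak : ∀ z : H, Tendsto (fun k => inner ℝ (x k) z) atTop (𝓝 (inner ℝ x₀ z))) :
    Tendsto (fun k => b (d k) (x k)) atTop (𝓝 (b d₀ x₀)) := by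
  obtain ⟨C, hC⟩ := exists_norm_le_of_tendsto_inner hweak
  have hsmall : Tendsto (fun k => b (d k - d₀) (x k)) atTop (𝓝 0) := by
    refine squeeze_zero_norm (a := fun k => ‖b‖ * ‖d k - d₀‖ * C) (fun k => ?_) ?_
    · exact (b.le_opNorm₂ _ _).trans (by gcongr; exact hC k)
    · simpa using ((tendsto_iff_norm_sub_tendsto_zero.mp hd).const_mul ‖b‖).mul_const C
  have hfixed := tendsto_apply_of_tendsto_inner (b d₀) hweak
  simpa using hsmall.add hfixed

end WeakConvergence

theorem bilinear_difference_convergence_general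
    {H : Type*} [NormedAddCommGroup H] [InnerProductSpace ℝ H] [CompleteSpace H]
    (b : H →L[ℝ] H →L[ℝ] ℝ)
    (x y : ℕ → H) (x₀ y₀ : H)
    (hweak : ∀ z : H, Tendsto (fun k => (inner ℝ (x k) z : ℝ)) atTop (𝓝 (inner ℝ x₀ z)))
    (hstrong : Tendsto (fun k => ‖(x k - y k) - (x₀ - y₀)‖) atTop (𝓝 0)) :
    Tendsto (fun k => b (x k) (x k) - b (y k) (y k)) atTop
      (𝓝 (b x₀ x₀ - b y₀ y₀)) := by
  have hd : Tendsto (fun k => x k - y k) atTop (𝓝 (x₀ - y₀)) :=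
    tendsto_iff_norm_sub_tendsto_zero.mpr hstrong
  have hleft := tendsto_apply_apply_of_tendsto_of_tendsto_inner b hd hweak
  have hright := tendsto_apply_apply_of_tendsto_of_tendsto_inner b.flip hd hweak
  have hdiag := (b.continuous₂.tendsto (x₀ - y₀, x₀ - y₀)).comp (hd.prodMk_nhds hd)
  simp only [b.apply_self_sub_apply_self]
  exact (hleft.add hright).sub hdiag

/-- If `b` is a continuous symmetric bilinear form on a real Hilbert space,
`x_k ⇀ x` weakly and `x_k − y_k → x − y` strongly, then
`b(x_k,x_k) − b(y_k,y_k) → b(x,x) − b(y,y)`. -/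
theorem bilinear_difference_convergence
    {H : Type*} [NormedAddCommGroup H] [InnerProductSpace ℝ H] [CompleteSpace H]
    (b : H →L[ℝ] H →L[ℝ] ℝ)
    (hsymm : ∀ x y : H, b x y = b y x)
    (x y : ℕ → H) (x₀ y₀ : H)
    (hweak : ∀ z : H, Tendsto (fun k => (inner ℝ (x k) z : ℝ)) atTop (𝓝 (inner ℝ x₀ z)))
    (hstrong : Tendsto (fun k => ‖(x k - y k) - (x₀ - y₀)‖) atTop (𝓝 0)) :
    Tendsto (fun k => b (x k) (x k) - b (y k) (y k)) atTop
      (𝓝 (b x₀ x₀ - b y₀ y₀)) :=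
  bilinear_difference_convergence_general b x y x₀ y₀ hweak hstrong
end
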